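/- arXiv:1904.01252 — 2 statements merged into one kernel-verified Lean document; each statement's English description precedes it below -/
import Mathlib

section
/- Let |q| < 1, |a| < 1, and let T_a be the linear map on polynomials defined on f by (T_a f)(x) = (a e^{iθ}, a e^{-iθ}; q)_∞ ∑_{n=0}^∞ f(q^n) a^n H_n(x|q)/(q;q)_n, where x = cos θ and H_n(x|q) are the continuous q-Hermite polynomials. Then T_a x^k = (a e^{iθ}, a e^{-iθ}; q)_k for all k ≥ 0. -/
open Complex Finset

noncomputable section

/-- finite q-Pochhammer symbol (z;q)_k -/
def qPoch (z q : ℂ) (k : ℕ) : ℂ := ∏ j ∈ Finset.range k, (1 - z * q ^ j)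

/-- infinite q-Pochhammer symbol (z;q)_∞ -/
def qPochInf (z q : ℂ) : ℂ := ∏' j : ℕ, (1 - z * q ^ j)

lemma summable_log_aux {z q : ℂ} (hq : ‖q‖ < 1) :
    Summable fun j : ℕ => Complex.log (1 - z * q ^ j) := by
  apply Summable.of_norm_bounded_eventually_nat (g := fun j => 3/2 * (‖z‖ * ‖q‖ ^ j))
  · exact ((summable_geometric_of_lt_one (norm_nonneg q) hq).mul_left ‖z‖).mul_left _
  · have h0 : Filter.Tendsto (fun j : ℕ => ‖z‖ * ‖q‖ ^ j) Filter.atTop (nhds 0) := by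
      simpa using (tendsto_pow_atTop_nhds_zero_of_norm_lt_one (by simpa using hq)).const_mul ‖z‖
    filter_upwards [h0.eventually_le_const (by norm_num : (0:ℝ) < 1/2)] with j hj
    have h1 : ‖-(z * q ^ j)‖ ≤ 1/2 := by simpa [norm_mul, norm_pow] using hj
    calc ‖Complex.log (1 - z * q ^ j)‖ = ‖Complex.log (1 + -(z * q ^ j))‖ := by ring_nf
      _ ≤ 3/2 * ‖-(z * q ^ j)‖ := Complex.norm_log_one_add_half_le_self h1
      _ = 3/2 * (‖z‖ * ‖q‖ ^ j) := by simp [norm_mul, norm_pow]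

lemma factor_ne_zero {z q : ℂ} (hz : ‖z‖ < 1) (hq : ‖q‖ < 1) (j : ℕ) :
    (1 : ℂ) - z * q ^ j ≠ 0 := by
  intro h
  have hlt : ‖z * q ^ j‖ < 1 := by
    calc ‖z * q ^ j‖ = ‖z‖ * ‖q‖ ^ j := by simp [norm_mul, norm_pow]
      _ ≤ ‖z‖ * 1 := mul_le_mul_of_nonneg_left (pow_le_one₀ (norm_nonneg q) hq.le) (norm_nonneg z)
      _ < 1 := by simpa using hz
  have h2 : z * q ^ j = 1 := by linear_combination -h
  rw [h2] at hlt; simp at hlt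

lemma qPochInf_eq_exp {z q : ℂ} (hz : ‖z‖ < 1) (hq : ‖q‖ < 1) :
    qPochInf z q = Complex.exp (∑' j : ℕ, Complex.log (1 - z * q ^ j)) := by
  have := Complex.cexp_tsum_eq_tprod (f := fun j => 1 - z * q ^ j)
    (fun j => factor_ne_zero hz hq j) (summable_log_aux hq)
  rw [qPochInf, ← this]

lemma qPochInf_ne_zero {z q : ℂ} (hz : ‖z‖ < 1) (hq : ‖q‖ < 1) : qPochInf z q ≠ 0 := by
  rw [qPochInf_eq_exp hz hq]; exact Complex.exp_ne_zero _

lemma norm_mul_pow_lt_one {z q : ℂ} (hz : ‖z‖ < 1) (hq : ‖q‖ < 1) (k : ℕ) :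
    ‖z * q ^ k‖ < 1 := by
  calc ‖z * q ^ k‖ = ‖z‖ * ‖q‖ ^ k := by simp [norm_mul, norm_pow]
    _ ≤ ‖z‖ * 1 := mul_le_mul_of_nonneg_left (pow_le_one₀ (norm_nonneg q) hq.le) (norm_nonneg z)
    _ < 1 := by simpa using hz

lemma qPochInf_split {z q : ℂ} (hz : ‖z‖ < 1) (hq : ‖q‖ < 1) (k : ℕ) :
    qPochInf z q = qPoch z q k * qPochInf (z * q ^ k) q := by
  have hz' : ‖z * q ^ k‖ < 1 := norm_mul_pow_lt_one hz hq k
  have hfun : ∀ j : ℕ, (1 : ℂ) - z * q ^ (j + k) = 1 - (z * q ^ k) * q ^ j := by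
    intro j; rw [pow_add]; ring
  rw [qPochInf_eq_exp hz hq, qPochInf_eq_exp hz' hq,
    ← Summable.sum_add_tsum_nat_add k (summable_log_aux hq), Complex.exp_add, qPoch]
  congr 1
  · rw [Complex.exp_sum]
    exact Finset.prod_congr rfl fun j _ => Complex.exp_log (factor_ne_zero hz hq j)
  · congr 1
    exact tsum_congr fun j => by rw [hfun j]

/-- the transform (T_a f)(x) = (ae^{iθ},ae^{-iθ};q)_∞ ∑_n f(q^n) a^n H_n(x|q)/(q;q)_n,
where H_n are the continuous q-Hermite polynomials (defined through their generating function),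
satisfies T_a x^k = (ae^{iθ},ae^{-iθ};q)_k. -/
theorem stmt4 (q a : ℂ) (hq : ‖q‖ < 1) (ha : ‖a‖ < 1)
    (H : ℕ → ℂ → ℂ)
    (hH : ∀ (t : ℂ) (θ : ℝ), ‖t‖ < 1 →
      HasSum (fun n : ℕ => H n (Real.cos θ : ℂ) * t ^ n / qPoch q q n)
        (1 / (qPochInf (t * Complex.exp (θ * Complex.I)) q *
              qPochInf (t * Complex.exp (-θ * Complex.I)) q)))
    (k : ℕ) (θ : ℝ) :
    qPochInf (a * Complex.exp (θ * Complex.I)) q * qPochInf (a * Complex.exp (-θ * Complex.I)) q *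
        ∑' n : ℕ, (q ^ n) ^ k * a ^ n * H n (Real.cos θ : ℂ) / qPoch q q n =
      qPoch (a * Complex.exp (θ * Complex.I)) q k *
        qPoch (a * Complex.exp (-θ * Complex.I)) q k := by
  set eP := Complex.exp (θ * Complex.I) with heP
  set eM := Complex.exp (-θ * Complex.I) with heM
  have hneP : ‖eP‖ = 1 := by
    rw [heP, Complex.norm_exp]
    simp
  have hneM : ‖eM‖ = 1 := by
    rw [heM, Complex.norm_exp]
    simp
  have haeP : ‖a * eP‖ < 1 := by rw [norm_mul, hneP, mul_one]; exact ha
  have haeM : ‖a * eM‖ < 1 := by rw [norm_mul, hneM, mul_one]; exact ha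
  have ht : ‖a * q ^ k‖ < 1 := norm_mul_pow_lt_one ha hq k
  have hs := hH (a * q ^ k) θ ht
  have hsum : ∑' n : ℕ, (q ^ n) ^ k * a ^ n * H n (Real.cos θ : ℂ) / qPoch q q n
      = 1 / (qPochInf (a * q ^ k * eP) q * qPochInf (a * q ^ k * eM) q) := by
    rw [← hs.tsum_eq]
    refine tsum_congr fun n => ?_
    congr 1
    rw [mul_pow, ← pow_mul, mul_comm n k, pow_mul]
    ring
  rw [hsum]
  have hP : a * q ^ k * eP = a * eP * q ^ k := by ring
  have hM : a * q ^ k * eM = a * eM * q ^ k := by ring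
  rw [hP, hM, qPochInf_split haeP hq k, qPochInf_split haeM hq k]
  have tP : qPochInf (a * eP * q ^ k) q ≠ 0 :=
    qPochInf_ne_zero (norm_mul_pow_lt_one haeP hq k) hq
  have tM : qPochInf (a * eM * q ^ k) q ≠ 0 :=
    qPochInf_ne_zero (norm_mul_pow_lt_one haeM hq k) hq
  field_simp
  ring_nf
  exact mul_inv_cancel_right₀ tM _
end
end

section
/- For 0 < q < 1 and 0 < ab < q, the Al-Salam–Chihara polynomials satisfy, for m ≠ n, (1/2π)∫_{-1}^1 p_n(x;a,b|q) p_m(x;a,b|q) w(θ;a,b|q) dx/√(1-x²) = (1/(q;q)_∞) ∑_{k=0}^∞ q_n(q^k; ab/q|q) q_m(q^k; ab/q|q) (ab)^k/(q;q)_k = 0; i.e., orthogonality of the Al-Salam–Chihara polynomials follows from that of the little q-Laguerre polynomials via the transform T_a. -/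
open Complex Finset

noncomputable section

/-- Askey–Wilson weight w(θ;a,b,c,d|q); taking c = d = 0 (resp. b = c = d = 0, etc.)
gives the continuous dual q-Hahn / Al-Salam–Chihara weights since (0;q)_∞ = 1. -/
def AWw (q a b c d : ℂ) (θ : ℝ) : ℂ :=
  (qPochInf (Complex.exp (2*θ*Complex.I)) q * qPochInf (Complex.exp (-(2*θ)*Complex.I)) q) /
  (qPochInf (a * Complex.exp (θ*Complex.I)) q * qPochInf (a * Complex.exp (-θ*Complex.I)) q *
   qPochInf (b * Complex.exp (θ*Complex.I)) q * qPochInf (b * Complex.exp (-θ*Complex.I)) q *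
   qPochInf (c * Complex.exp (θ*Complex.I)) q * qPochInf (c * Complex.exp (-θ*Complex.I)) q *
   qPochInf (d * Complex.exp (θ*Complex.I)) q * qPochInf (d * Complex.exp (-θ*Complex.I)) q)

/-- little q-Laguerre polynomial -/
def qLagPoly (q aa : ℂ) (n : ℕ) : Polynomial ℂ :=
  ∑ k ∈ Finset.range (n + 1),
    Polynomial.C (qPoch (q ^ (-(n:ℤ))) q k / (qPoch (aa * q) q k * qPoch q q k) * q ^ k) *
      Polynomial.X ^ k

/-- Al-Salam–Chihara polynomial p_n(x;a,b|q) = ₃φ₂(q^{-n},ae^{iθ},ae^{-iθ};ab,0|q,q),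
as a function of x with θ = arccos x. -/
def pASCx (q a b : ℂ) (n : ℕ) (x : ℝ) : ℂ :=
  ∑ k ∈ Finset.range (n + 1),
    qPoch (q ^ (-(n:ℤ))) q k *
      (qPoch (a * Complex.exp (Real.arccos x * Complex.I)) q k *
        qPoch (a * Complex.exp (-(Real.arccos x) * Complex.I)) q k) /
      (qPoch (a * b) q k * qPoch q q k) * q ^ k

lemma qPoch_succ (z q : ℂ) (k : ℕ) : qPoch z q (k+1) = qPoch z q k * (1 - z * q^k) :=
  Finset.prod_range_succ _ _
lemma qPoch_real (r s : ℝ) (k : ℕ) :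
    qPoch (r:ℂ) (s:ℂ) k = ((∏ j ∈ Finset.range k, (1 - r*s^j) : ℝ) : ℂ) := by
  unfold qPoch; push_cast; rfl
lemma qPochR_pos {r s : ℝ} (hr : 0 ≤ r) (hr1 : r < 1) (hs : 0 ≤ s) (hs1 : s ≤ 1) (k : ℕ) :
    0 < ∏ j ∈ Finset.range k, (1 - r*s^j) := by
  apply Finset.prod_pos
  intro i _
  have h1 : r * s^i ≤ r := by
    nlinarith [pow_le_one₀ hs hs1 (n := i), pow_nonneg hs i]
  linarith

variable {q : ℝ}

lemma euler_summable (hq0 : 0 < q) (hq1 : q < 1) {z : ℂ} (hz : ‖z‖ < 1) :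
    Summable (fun k : ℕ => z^k / qPoch (q:ℂ) (q:ℂ) k) := by
  obtain ⟨r, hr⟩ : ∃ r : ℝ, r = (1 + ‖z‖)/2 := ⟨_, rfl⟩
  have hr1 : r < 1 := by rw [hr]; linarith
  have hrz : ‖z‖ < r := by rw [hr]; linarith
  have hr0 : 0 < r := lt_of_le_of_lt (norm_nonneg z) hrz
  apply summable_of_ratio_norm_eventually_le hr1
  have hev : ∀ᶠ k : ℕ in Filter.atTop, q ^ (k+1) < 1 - ‖z‖/r := by
    have h : Filter.Tendsto (fun k : ℕ => q ^ (k+1)) Filter.atTop (nhds 0) := by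
      exact (tendsto_pow_atTop_nhds_zero_of_lt_one hq0.le hq1).comp (Filter.tendsto_add_atTop_nat 1)
    have hpos : 0 < 1 - ‖z‖/r := by
      have : ‖z‖/r < 1 := (div_lt_one hr0).2 hrz
      linarith
    exact h.eventually (eventually_lt_nhds hpos)
  filter_upwards [hev] with k hk
  have hPk : qPoch (q:ℂ) (q:ℂ) k = ((∏ j ∈ Finset.range k, (1 - q*q^j) : ℝ) : ℂ) := qPoch_real q q k
  have hPpos : ∀ l : ℕ, 0 < ∏ j ∈ Finset.range l, (1 - q*q^j) :=
    fun l => qPochR_pos hq0.le hq1 hq0.le hq1.le l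
  rw [qPoch_succ, hPk]
  have h1 : (1 : ℂ) - (q:ℂ) * (q:ℂ)^k = ((1 - q*q^k : ℝ) : ℂ) := by push_cast; ring
  rw [h1, pow_succ]
  rw [norm_div, norm_div, norm_mul, norm_mul, Complex.norm_real, Complex.norm_real,
    Real.norm_eq_abs, Real.norm_eq_abs]
  have hqk : 0 < 1 - q*q^k := by
    have hq' : q * q ^ k = q ^ (k+1) := by ring
    have h2 : (0:ℝ) < 1 - ‖z‖/r := by
      have : ‖z‖/r < 1 := (div_lt_one hr0).2 hrz
      linarith
    have h3 : 0 ≤ ‖z‖/r := div_nonneg (norm_nonneg z) hr0.le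
    rw [hq']; linarith
  rw [abs_of_pos (hPpos k), abs_of_pos hqk]
  have key : ‖z‖ ≤ r * (1 - q*q^k) := by
    have hq' : q * q ^ k = q ^ (k+1) := by ring
    have h2 : ‖z‖/r ≤ 1 - q*q^k := by rw [hq']; linarith
    calc ‖z‖ = r * (‖z‖/r) := by field_simp
    _ ≤ r * (1 - q*q^k) := by nlinarith
  rw [← mul_div_assoc, div_le_div_iff₀ (mul_pos (hPpos k) hqk) (hPpos k)]
  have hA : (0:ℝ) ≤ ‖z^k‖ := norm_nonneg _
  nlinarith [hPpos k, mul_le_mul_of_nonneg_left key hA]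

noncomputable def Fq (q : ℝ) (z : ℂ) : ℂ := ∑' k : ℕ, z ^ k / qPoch (q:ℂ) (q:ℂ) k

lemma one_sub_qpow_ne (hq0 : 0 < q) (hq1 : q < 1) (k : ℕ) : (1:ℂ) - (q:ℂ)^(k+1) ≠ 0 := by
  have h : (1:ℂ) - (q:ℂ)^(k+1) = ((1 - q^(k+1) : ℝ) : ℂ) := by push_cast; ring
  rw [h]
  have : 0 < 1 - q^(k+1) := by
    have : q^(k+1) < 1 := pow_lt_one₀ hq0.le hq1 (Nat.succ_ne_zero k)
    linarith
  exact_mod_cast this.ne'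

lemma qPochC_ne (hq0 : 0 < q) (hq1 : q < 1) (k : ℕ) : qPoch (q:ℂ) (q:ℂ) k ≠ 0 := by
  rw [qPoch_real]
  exact_mod_cast (qPochR_pos hq0.le hq1 hq0.le hq1.le k).ne'

lemma Fq_funcEq (hq0 : 0 < q) (hq1 : q < 1) {z : ℂ} (hz : ‖z‖ < 1) :
    Fq q (z * q) = (1 - z) * Fq q z := by
  have hs := euler_summable hq0 hq1 hz
  have hzq : ‖z * (q:ℂ)‖ < 1 := by
    rw [norm_mul, Complex.norm_real, Real.norm_eq_abs, abs_of_pos hq0]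
    nlinarith [norm_nonneg z]
  have hsq := euler_summable hq0 hq1 hzq
  have hg : Summable (fun k : ℕ => (z^k - (z*(q:ℂ))^k) / qPoch (q:ℂ) (q:ℂ) k) := by
    have := hs.sub hsq
    refine this.congr fun k => ?_
    rw [sub_div]
  have hshift : ∀ k : ℕ, (z^(k+1) - (z*(q:ℂ))^(k+1)) / qPoch (q:ℂ) (q:ℂ) (k+1)
      = z * (z^k / qPoch (q:ℂ) (q:ℂ) k) := by
    intro k
    rw [qPoch_succ]
    have h1 : z^(k+1) - (z*(q:ℂ))^(k+1) = z^(k+1) * (1 - (q:ℂ)^(k+1)) := by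
      rw [mul_pow]; ring
    have h2 : (1:ℂ) - (q:ℂ)*(q:ℂ)^k = 1 - (q:ℂ)^(k+1) := by rw [pow_succ]; ring
    rw [h1, h2]
    rw [mul_comm (qPoch (q:ℂ) (q:ℂ) k) _, ← div_div, mul_div_assoc,
      div_self (one_sub_qpow_ne hq0 hq1 k), mul_one, pow_succ]
    ring
  have heq1 : (∑' k : ℕ, (z^k - (z*(q:ℂ))^k) / qPoch (q:ℂ) (q:ℂ) k) = z * Fq q z := by
    rw [Summable.tsum_eq_zero_add hg]
    simp only [hshift]
    rw [tsum_mul_left]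
    simp [Fq]
  have heq2 : (∑' k : ℕ, (z^k - (z*(q:ℂ))^k) / qPoch (q:ℂ) (q:ℂ) k) = Fq q z - Fq q (z * q) := by
    simp only [sub_div]
    rw [Summable.tsum_sub hs hsq]
    rfl
  have := heq2.symm.trans heq1
  unfold Fq at *
  linear_combination -this

lemma Fq_shift (hq0 : 0 < q) (hq1 : q < 1) {z : ℂ} (hz : ‖z‖ < 1) (i : ℕ) :
    Fq q (z * (q:ℂ)^i) = qPoch z (q:ℂ) i * Fq q z := by
  induction i with
  | zero => simp [qPoch]
  | succ i ih =>
      have hzi : ‖z * (q:ℂ)^i‖ < 1 := by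
        rw [norm_mul, norm_pow, Complex.norm_real, Real.norm_eq_abs, abs_of_pos hq0]
        have h1 : q^i ≤ 1 := pow_le_one₀ hq0.le hq1.le
        nlinarith [norm_nonneg z, pow_pos hq0 i]
      have h2 : z * (q:ℂ)^(i+1) = (z * (q:ℂ)^i) * (q:ℂ) := by rw [pow_succ]; ring
      rw [h2, Fq_funcEq hq0 hq1 hzi, ih, qPoch_succ]
      ring

noncomputable def qBinom (q : ℂ) (M i : ℕ) : ℂ :=
  qPoch q q M / (qPoch q q i * qPoch q q (M - i))

lemma qBinom_zero (hq0 : 0 < q) (hq1 : q < 1) (M : ℕ) : qBinom (q:ℂ) M 0 = 1 := by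
  unfold qBinom
  rw [show qPoch (q:ℂ) (q:ℂ) 0 = 1 from rfl]
  rw [Nat.sub_zero, one_mul, div_self (qPochC_ne hq0 hq1 M)]

lemma qBinom_self (hq0 : 0 < q) (hq1 : q < 1) (M : ℕ) : qBinom (q:ℂ) M M = 1 := by
  unfold qBinom
  rw [Nat.sub_self, show qPoch (q:ℂ) (q:ℂ) 0 = 1 from rfl, mul_one,
    div_self (qPochC_ne hq0 hq1 M)]

lemma qBinom_pascal (hq0 : 0 < q) (hq1 : q < 1) {M j : ℕ} (h : j < M) :
    qBinom (q:ℂ) (M+1) (j+1) = qBinom (q:ℂ) M (j+1) + (q:ℂ)^(M-j) * qBinom (q:ℂ) M j := by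
  obtain ⟨u, rfl⟩ : ∃ u, M = j + 1 + u := ⟨M - (j+1), by omega⟩
  unfold qBinom
  have e1 : j + 1 + u + 1 - (j + 1) = u + 1 := by omega
  have e2 : j + 1 + u - (j + 1) = u := by omega
  have e3 : j + 1 + u - j = u + 1 := by omega
  rw [e1, e2, e3]
  have hM1 : qPoch (q:ℂ) (q:ℂ) (j+1+u+1) = qPoch (q:ℂ) (q:ℂ) (j+1+u) * (1 - (q:ℂ)^(j+1+u+1)) := by
    rw [qPoch_succ, pow_succ]; ring_nf
  have hu1 : qPoch (q:ℂ) (q:ℂ) (u+1) = qPoch (q:ℂ) (q:ℂ) u * (1 - (q:ℂ)^(u+1)) := by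
    rw [qPoch_succ, pow_succ]; ring_nf
  have hj1 : qPoch (q:ℂ) (q:ℂ) (j+1) = qPoch (q:ℂ) (q:ℂ) j * (1 - (q:ℂ)^(j+1)) := by
    rw [qPoch_succ, pow_succ]; ring_nf
  rw [hM1, hu1, hj1]
  have n1 := qPochC_ne hq0 hq1 (j+1+u)
  have n2 := qPochC_ne hq0 hq1 u
  have n3 := qPochC_ne hq0 hq1 j
  have n4 := one_sub_qpow_ne hq0 hq1 u
  have n5 := one_sub_qpow_ne hq0 hq1 j
  field_simp
  ring_nf

lemma gauss (hq0 : 0 < q) (hq1 : q < 1) (u : ℂ) (M : ℕ) :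
    qPoch u (q:ℂ) M =
      ∑ i ∈ Finset.range (M+1), (-1)^i * (q:ℂ)^(i.choose 2) * qBinom (q:ℂ) M i * u^i := by
  induction M with
  | zero => simp [qPoch, qBinom_self hq0 hq1 0]
  | succ M ih =>
      set t : ℕ → ℂ := fun i => (-1)^i * (q:ℂ)^(i.choose 2) * qBinom (q:ℂ) M i * u^i with ht
      set T : ℕ → ℂ := fun i => (-1)^i * (q:ℂ)^(i.choose 2) * qBinom (q:ℂ) (M+1) i * u^i with hT
      have hS1 : ∑ i ∈ Finset.range (M+1), t i = (∑ i ∈ Finset.range M, t (i+1)) + t 0 :=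
        Finset.sum_range_succ' t M
      have hS2 : ∑ i ∈ Finset.range (M+1), t i = (∑ i ∈ Finset.range M, t i) + t M :=
        Finset.sum_range_succ t M
      have hRHS : ∑ i ∈ Finset.range (M+2), T i
          = (∑ i ∈ Finset.range M, T (i+1)) + T 0 + T (M+1) := by
        rw [Finset.sum_range_succ T (M+1), Finset.sum_range_succ' T M]
      have hT0 : T 0 = t 0 := by
        simp only [hT, ht, qBinom_zero hq0 hq1]
      have hTtop : T (M+1) = -(u * (q:ℂ)^M) * t M := by
        simp only [hT, ht, qBinom_self hq0 hq1]
        have hc : (M+1).choose 2 = M.choose 2 + M := by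
          rw [Nat.choose_succ_succ, Nat.choose_one_right]; ring
        rw [hc, pow_add, pow_succ]
        ring
      have hmid : ∀ i ∈ Finset.range M, T (i+1) = t (i+1) - (u * (q:ℂ)^M) * t i := by
        intro i hi
        rw [Finset.mem_range] at hi
        simp only [hT, ht]
        have hc : (i+1).choose 2 = i.choose 2 + i := by
          rw [Nat.choose_succ_succ, Nat.choose_one_right]; ring
        have e : ((q:ℂ))^((i+1).choose 2) = (q:ℂ)^(i.choose 2) * (q:ℂ)^i := by
          rw [hc, pow_add]
        have hpow : (q:ℂ)^(M-i) * (q:ℂ)^i = (q:ℂ)^M := by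
          rw [← pow_add, Nat.sub_add_cancel hi.le]
        rw [e, qBinom_pascal hq0 hq1 hi]
        linear_combination ((-1:ℂ)^(i+1) * (q:ℂ)^(i.choose 2) * qBinom (q:ℂ) M i * u^(i+1)) * hpow
      have hmidsum : ∑ i ∈ Finset.range M, T (i+1)
          = ∑ i ∈ Finset.range M, (t (i+1) - (u * (q:ℂ)^M) * t i) := Finset.sum_congr rfl hmid
      have hsplit : ∑ i ∈ Finset.range M, (t (i+1) - (u * (q:ℂ)^M) * t i)
          = (∑ i ∈ Finset.range M, t (i+1)) - (u * (q:ℂ)^M) * ∑ i ∈ Finset.range M, t i := by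
        rw [Finset.sum_sub_distrib, Finset.mul_sum]
      rw [qPoch_succ, ih]
      linear_combination (1:ℂ)*hS1 - (u*(q:ℂ)^M)*hS2 - hRHS - hmidsum - hsplit - hT0 - hTtop

lemma qPochNeg (hq0 : 0 < q) (hq1 : q < 1) {m s : ℕ} (hsm : s ≤ m) :
    qPoch ((q:ℂ)^(-(m:ℤ))) (q:ℂ) s
      = (-1:ℂ)^s * (q:ℂ)^(s.choose 2) * ((q:ℂ)^(-(m:ℤ)))^s *
        (qPoch (q:ℂ) (q:ℂ) m / qPoch (q:ℂ) (q:ℂ) (m-s)) := by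
  have hQ : (q:ℂ) ≠ 0 := Complex.ofReal_ne_zero.2 hq0.ne'
  induction s with
  | zero =>
      rw [show qPoch ((q:ℂ)^(-(m:ℤ))) (q:ℂ) 0 = 1 from rfl, Nat.sub_zero,
        div_self (qPochC_ne hq0 hq1 m)]
      simp
  | succ s ih =>
      have hsm' : s ≤ m := Nat.le_of_succ_le hsm
      rw [qPoch_succ, ih hsm']
      have h1 : ((q:ℂ)^(-(m:ℤ)) * (q:ℂ)^s) * (q:ℂ)^(m-s) = 1 := by
        rw [← zpow_natCast (q:ℂ) s, ← zpow_natCast (q:ℂ) (m-s), ← zpow_add₀ hQ, ← zpow_add₀ hQ,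
          show (-(m:ℤ) + (s:ℤ) + ((m-s : ℕ):ℤ) : ℤ) = 0 by omega]
        exact zpow_zero _
      have hfac : (1 - (q:ℂ)^(-(m:ℤ)) * (q:ℂ)^s)
          = -((q:ℂ)^(-(m:ℤ)) * (q:ℂ)^s) * (1 - (q:ℂ)^(m-s)) := by
        linear_combination -h1
      have hms : qPoch (q:ℂ) (q:ℂ) (m-s)
          = qPoch (q:ℂ) (q:ℂ) (m-(s+1)) * (1 - (q:ℂ)^(m-s)) := by
        have h2 : m - s = (m - (s+1)) + 1 := by omega
        rw [h2, qPoch_succ]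
        congr 2
        rw [← pow_succ']
      have hB : (1:ℂ) - (q:ℂ)^(m-s) ≠ 0 := by
        have h3 : m - s = (m - (s+1)) + 1 := by omega
        rw [h3]; exact one_sub_qpow_ne hq0 hq1 _
      have hchoose : (s+1).choose 2 = s.choose 2 + s := by
        rw [Nat.choose_succ_succ, Nat.choose_one_right]; ring
      rw [hfac, hms, hchoose, pow_add]
      have hDm := qPochC_ne hq0 hq1 (m-(s+1))
      field_simp
      ring

lemma phi10 (hq0 : 0 < q) (hq1 : q < 1) (m : ℕ) (z : ℂ) :
    ∑ s ∈ Finset.range (m+1), qPoch ((q:ℂ)^(-(m:ℤ))) (q:ℂ) s / qPoch (q:ℂ) (q:ℂ) s * z^s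
      = qPoch (z * (q:ℂ)^(-(m:ℤ))) (q:ℂ) m := by
  rw [gauss hq0 hq1 (z * (q:ℂ)^(-(m:ℤ))) m]
  refine Finset.sum_congr rfl fun s hs => ?_
  rw [Finset.mem_range] at hs
  have hsm : s ≤ m := by omega
  rw [qPochNeg hq0 hq1 hsm, mul_pow]
  unfold qBinom
  have n1 := qPochC_ne hq0 hq1 s
  have n2 := qPochC_ne hq0 hq1 (m-s)
  field_simp

lemma inner_vanish (hq0 : 0 < q) (hq1 : q < 1) {j m : ℕ} (hjm : j < m) (w : ℂ) :
    ∑ s ∈ Finset.range (m+1),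
      qPoch ((q:ℂ)^(-(m:ℤ))) (q:ℂ) s / qPoch (q:ℂ) (q:ℂ) s * (q:ℂ)^s
        * qPoch (w * (q:ℂ)^s) (q:ℂ) j = 0 := by
  have hQ : (q:ℂ) ≠ 0 := Complex.ofReal_ne_zero.2 hq0.ne'
  have hG : ∀ s : ℕ, qPoch (w * (q:ℂ)^s) (q:ℂ) j
      = ∑ r ∈ Finset.range (j+1),
          (-1)^r * (q:ℂ)^(r.choose 2) * qBinom (q:ℂ) j r * (w^r * (((q:ℂ)^r)^s)) := by
    intro s
    rw [gauss hq0 hq1 (w * (q:ℂ)^s) j]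
    refine Finset.sum_congr rfl fun r _ => ?_
    rw [mul_pow, ← pow_mul, ← pow_mul, Nat.mul_comm s r]
  calc ∑ s ∈ Finset.range (m+1),
        qPoch ((q:ℂ)^(-(m:ℤ))) (q:ℂ) s / qPoch (q:ℂ) (q:ℂ) s * (q:ℂ)^s
          * qPoch (w * (q:ℂ)^s) (q:ℂ) j
      = ∑ s ∈ Finset.range (m+1), ∑ r ∈ Finset.range (j+1),
          ((-1)^r * (q:ℂ)^(r.choose 2) * qBinom (q:ℂ) j r * w^r)
            * (qPoch ((q:ℂ)^(-(m:ℤ))) (q:ℂ) s / qPoch (q:ℂ) (q:ℂ) s * ((q:ℂ)^(r+1))^s) := by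
        refine Finset.sum_congr rfl fun s _ => ?_
        rw [hG s, Finset.mul_sum]
        refine Finset.sum_congr rfl fun r _ => ?_
        have hp : ((q:ℂ)^(r+1))^s = (q:ℂ)^s * ((q:ℂ)^r)^s := by
          rw [← mul_pow, pow_succ']
        rw [hp]; ring
    _ = ∑ r ∈ Finset.range (j+1),
          ((-1)^r * (q:ℂ)^(r.choose 2) * qBinom (q:ℂ) j r * w^r)
            * ∑ s ∈ Finset.range (m+1),
                (qPoch ((q:ℂ)^(-(m:ℤ))) (q:ℂ) s / qPoch (q:ℂ) (q:ℂ) s * ((q:ℂ)^(r+1))^s) := by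
        rw [Finset.sum_comm]
        exact Finset.sum_congr rfl fun r _ => (Finset.mul_sum _ _ _).symm
    _ = 0 := by
        refine Finset.sum_eq_zero fun r hr => ?_
        rw [Finset.mem_range] at hr
        have hrm : r < m := by omega
        rw [phi10 hq0 hq1]
        have hmem : m - 1 - r ∈ Finset.range m := Finset.mem_range.2 (by omega)
        rw [show qPoch ((q:ℂ)^(r+1) * (q:ℂ)^(-(m:ℤ))) (q:ℂ) m
            = ∏ t ∈ Finset.range m, (1 - ((q:ℂ)^(r+1) * (q:ℂ)^(-(m:ℤ))) * (q:ℂ)^t) from rfl]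
        rw [Finset.prod_eq_zero hmem ?_, mul_zero]
        have hz : (q:ℂ)^(r+1) * (q:ℂ)^(-(m:ℤ)) * (q:ℂ)^(m-1-r) = 1 := by
          rw [← zpow_natCast (q:ℂ) (r+1), ← zpow_natCast (q:ℂ) (m-1-r), ← zpow_add₀ hQ,
            ← zpow_add₀ hQ,
            show ((r+1:ℕ):ℤ) + (-(m:ℤ)) + ((m-1-r:ℕ):ℤ) = 0 by omega]
          exact zpow_zero _
        linear_combination -hz

/- ## Auxiliary lemmas -/

lemma qPoch_add (z q : ℂ) (k j : ℕ) :
    qPoch z q (k+j) = qPoch z q k * qPoch (z * q^k) q j := by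
  unfold qPoch
  rw [Finset.prod_range_add]
  congr 1
  refine Finset.prod_congr rfl fun i _ => ?_
  rw [pow_add]; ring

lemma qPoch_ne {r s : ℝ} (hr : 0 ≤ r) (hr1 : r < 1) (hs : 0 ≤ s) (hs1 : s ≤ 1) (k : ℕ) :
    qPoch (r:ℂ) (s:ℂ) k ≠ 0 := by
  rw [qPoch_real]
  exact_mod_cast (qPochR_pos hr hr1 hs hs1 k).ne'

lemma qPoch_swap (z Q : ℂ) (i s : ℕ) :
    qPoch z Q i * qPoch (z*Q^i) Q s = qPoch z Q s * qPoch (z*Q^s) Q i := by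
  rw [← qPoch_add, ← qPoch_add, Nat.add_comm]


lemma qLag_eval (Q aa x : ℂ) (N : ℕ) :
    (qLagPoly Q aa N).eval x
      = ∑ i ∈ Finset.range (N+1),
          qPoch (Q ^ (-(N:ℤ))) Q i / (qPoch (aa * Q) Q i * qPoch Q Q i) * Q ^ i * x ^ i := by
  unfold qLagPoly
  rw [Polynomial.eval_finset_sum]
  refine Finset.sum_congr rfl fun i _ => ?_
  simp [Polynomial.eval_mul, Polynomial.eval_pow]

lemma main_vanish (hq0 : 0 < q) (hq1 : q < 1) {c : ℝ} (hc0 : 0 < c) (hcq : c < q)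
    {n m : ℕ} (hnm : n < m) :
    ∑' k : ℕ, (qLagPoly (q:ℂ) ((c:ℂ)/(q:ℂ)) n).eval ((q:ℂ)^k) *
      (qLagPoly (q:ℂ) ((c:ℂ)/(q:ℂ)) m).eval ((q:ℂ)^k) * (c:ℂ)^k *
      (1 / qPoch (q:ℂ) (q:ℂ) k) = 0 := by
  have hQ : (q:ℂ) ≠ 0 := Complex.ofReal_ne_zero.2 hq0.ne'
  have hc1 : c < 1 := hcq.trans hq1
  have hnorm : ∀ N : ℕ, ‖(c:ℂ) * (q:ℂ)^N‖ < 1 := by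
    intro N
    rw [norm_mul, norm_pow, Complex.norm_real, Complex.norm_real, Real.norm_eq_abs,
      Real.norm_eq_abs, abs_of_pos hc0, abs_of_pos hq0]
    have h1 : q^N ≤ 1 := pow_le_one₀ hq0.le hq1.le
    nlinarith [pow_pos hq0 N]
  set D : ℕ → ℕ → ℂ := fun N i =>
    qPoch ((q:ℂ) ^ (-(N:ℤ))) (q:ℂ) i / (qPoch ((c:ℂ)) (q:ℂ) i * qPoch (q:ℂ) (q:ℂ) i)
      * (q:ℂ) ^ i with hD
  have hca : (c:ℂ)/(q:ℂ) * (q:ℂ) = (c:ℂ) := div_mul_cancel₀ _ hQ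
  have hev : ∀ (N k : ℕ),
      (qLagPoly (q:ℂ) ((c:ℂ)/(q:ℂ)) N).eval ((q:ℂ)^k)
        = ∑ i ∈ Finset.range (N+1), D N i * ((q:ℂ)^k)^i := by
    intro N k
    rw [qLag_eval]
    refine Finset.sum_congr rfl fun i _ => ?_
    rw [hca]
  set g : ℕ → ℕ → ℕ → ℂ := fun i s k =>
    (D n i * D m s) * (((c:ℂ) * (q:ℂ)^(i+s))^k / qPoch (q:ℂ) (q:ℂ) k) with hg
  have hsummand : ∀ k : ℕ,
      (qLagPoly (q:ℂ) ((c:ℂ)/(q:ℂ)) n).eval ((q:ℂ)^k) *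
        (qLagPoly (q:ℂ) ((c:ℂ)/(q:ℂ)) m).eval ((q:ℂ)^k) * (c:ℂ)^k *
        (1 / qPoch (q:ℂ) (q:ℂ) k)
      = ∑ i ∈ Finset.range (n+1), ∑ s ∈ Finset.range (m+1), g i s k := by
    intro k
    rw [hev n k, hev m k, Finset.sum_mul_sum, Finset.sum_mul, Finset.sum_mul]
    refine Finset.sum_congr rfl fun i _ => ?_
    rw [Finset.sum_mul, Finset.sum_mul]
    refine Finset.sum_congr rfl fun s _ => ?_
    simp only [hg]
    have hexp : (i+s)*k = k*i + k*s := by ring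
    have hp : ((c:ℂ) * (q:ℂ)^(i+s))^k = (c:ℂ)^k * (((q:ℂ)^k)^i * ((q:ℂ)^k)^s) := by
      rw [mul_pow, ← pow_mul, ← pow_mul, ← pow_mul, ← pow_add, hexp]
    rw [hp]
    ring
  have hgsum : ∀ i s : ℕ, Summable (g i s) := by
    intro i s
    exact (euler_summable hq0 hq1 (hnorm (i+s))).mul_left _
  rw [tsum_congr hsummand]
  rw [Summable.tsum_finsetSum (fun i _ => summable_sum (fun s _ => hgsum i s))]
  have hstep : ∀ i ∈ Finset.range (n+1),
      (∑' k, ∑ s ∈ Finset.range (m+1), g i s k)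
        = (D n i * Fq q ((c:ℂ) * (q:ℂ)^i)) *
            ∑ s ∈ Finset.range (m+1), D m s * qPoch ((c:ℂ) * (q:ℂ)^i) (q:ℂ) s := by
    intro i hi
    rw [Summable.tsum_finsetSum (fun s _ => hgsum i s), Finset.mul_sum]
    refine Finset.sum_congr rfl fun s _ => ?_
    simp only [hg]
    rw [tsum_mul_left]
    have h2 : (c:ℂ) * (q:ℂ)^(i+s) = ((c:ℂ) * (q:ℂ)^i) * (q:ℂ)^s := by
      rw [pow_add]; ring
    have h3 : (∑' k, ((c:ℂ) * (q:ℂ)^(i+s))^k / qPoch (q:ℂ) (q:ℂ) k)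
        = Fq q ((c:ℂ) * (q:ℂ)^(i+s)) := rfl
    rw [h3, h2, Fq_shift hq0 hq1 (hnorm i) s]
    ring
  rw [Finset.sum_congr rfl hstep]
  refine Finset.sum_eq_zero fun i hi => ?_
  rw [Finset.mem_range] at hi
  have him : i < m := by omega
  have hci : qPoch (c:ℂ) (q:ℂ) i ≠ 0 := qPoch_ne hc0.le hc1 hq0.le hq1.le i
  have hinner : ∑ s ∈ Finset.range (m+1), D m s * qPoch ((c:ℂ) * (q:ℂ)^i) (q:ℂ) s = 0 := by
    have key := inner_vanish hq0 hq1 him (c:ℂ)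
    have hmul : qPoch (c:ℂ) (q:ℂ) i *
          ∑ s ∈ Finset.range (m+1), D m s * qPoch ((c:ℂ) * (q:ℂ)^i) (q:ℂ) s
        = ∑ s ∈ Finset.range (m+1),
            qPoch ((q:ℂ)^(-(m:ℤ))) (q:ℂ) s / qPoch (q:ℂ) (q:ℂ) s * (q:ℂ)^s
              * qPoch ((c:ℂ) * (q:ℂ)^s) (q:ℂ) i := by
      rw [Finset.mul_sum]
      refine Finset.sum_congr rfl fun s _ => ?_
      simp only [hD]
      have hcs : qPoch (c:ℂ) (q:ℂ) s ≠ 0 := qPoch_ne hc0.le hc1 hq0.le hq1.le s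
      have hqs : qPoch (q:ℂ) (q:ℂ) s ≠ 0 := qPochC_ne hq0 hq1 s
      have hswap := qPoch_swap (c:ℂ) (q:ℂ) i s
      generalize qPoch ((q:ℂ) ^ (-(m:ℤ))) (q:ℂ) s = A
      calc qPoch (c:ℂ) (q:ℂ) i *
            (A / (qPoch (c:ℂ) (q:ℂ) s * qPoch (q:ℂ) (q:ℂ) s) * (q:ℂ)^s
              * qPoch ((c:ℂ) * (q:ℂ)^i) (q:ℂ) s)
          = A / (qPoch (c:ℂ) (q:ℂ) s * qPoch (q:ℂ) (q:ℂ) s) * (q:ℂ)^s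
              * (qPoch (c:ℂ) (q:ℂ) i * qPoch ((c:ℂ) * (q:ℂ)^i) (q:ℂ) s) := by ring
        _ = A / (qPoch (c:ℂ) (q:ℂ) s * qPoch (q:ℂ) (q:ℂ) s) * (q:ℂ)^s
              * (qPoch (c:ℂ) (q:ℂ) s * qPoch ((c:ℂ) * (q:ℂ)^s) (q:ℂ) i) := by rw [hswap]
        _ = A / qPoch (q:ℂ) (q:ℂ) s * (q:ℂ)^s * qPoch ((c:ℂ) * (q:ℂ)^s) (q:ℂ) i := by
            field_simp
    have h4 := hmul.trans key
    exact (mul_eq_zero.1 h4).resolve_left hci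
  rw [hinner, mul_zero]

/-- for m ≠ n, the Al-Salam–Chihara orthogonality follows via T_a, T_b from the
little q-Laguerre orthogonality: the continuous inner product of p_n and p_m equals the discrete
inner product of q_n(·;ab/q|q) and q_m(·;ab/q|q), and the latter is 0. -/
theorem stmt11 (q a b : ℝ) (hq0 : 0 < q) (hq1 : q < 1) (hab0 : 0 < a * b) (habq : a * b < q)
    (n m : ℕ) (hnm : n ≠ m)
    (Ta Tb : Polynomial ℂ → ℝ → ℂ)
    (hPlancherel : ∀ f g : Polynomial ℂ,
      (1 / (2 * Real.pi) : ℂ) *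
          ∫ x in (-1:ℝ)..1,
            Ta f x * Tb g x * AWw (q : ℂ) (a : ℂ) (b : ℂ) 0 0 (Real.arccos x) /
              (Real.sqrt (1 - x ^ 2) : ℂ) =
        (1 / qPochInf (q : ℂ) (q : ℂ)) *
          ∑' k : ℕ, f.eval ((q : ℂ) ^ k) * g.eval ((q : ℂ) ^ k) * ((a : ℂ) * b) ^ k /
            qPoch (q : ℂ) (q : ℂ) k)
    (hTa : ∀ x : ℝ, Ta (qLagPoly (q : ℂ) ((a : ℂ) * b / q) n) x = pASCx (q : ℂ) a b n x)
    (hTb : ∀ x : ℝ, Tb (qLagPoly (q : ℂ) ((a : ℂ) * b / q) m) x = pASCx (q : ℂ) a b m x) :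
    ((1 / (2 * Real.pi) : ℂ) *
        ∫ x in (-1:ℝ)..1,
          pASCx (q : ℂ) a b n x * pASCx (q : ℂ) a b m x *
            AWw (q : ℂ) (a : ℂ) (b : ℂ) 0 0 (Real.arccos x) / (Real.sqrt (1 - x ^ 2) : ℂ) =
      (1 / qPochInf (q : ℂ) (q : ℂ)) *
        ∑' k : ℕ, (qLagPoly (q : ℂ) ((a : ℂ) * b / q) n).eval ((q : ℂ) ^ k) *
          (qLagPoly (q : ℂ) ((a : ℂ) * b / q) m).eval ((q : ℂ) ^ k) * ((a : ℂ) * b) ^ k /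
          qPoch (q : ℂ) (q : ℂ) k) ∧
    (1 / qPochInf (q : ℂ) (q : ℂ)) *
        ∑' k : ℕ, (qLagPoly (q : ℂ) ((a : ℂ) * b / q) n).eval ((q : ℂ) ^ k) *
          (qLagPoly (q : ℂ) ((a : ℂ) * b / q) m).eval ((q : ℂ) ^ k) * ((a : ℂ) * b) ^ k *
          (1 / qPoch (q : ℂ) (q : ℂ) k) = 0 := by
  have hq : (q:ℂ) ≠ 0 := Complex.ofReal_ne_zero.2 hq0.ne'
  have hcast : ((a:ℂ) * b) = (((a*b : ℝ)):ℂ) := by push_cast; ring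
  constructor
  · have hP := hPlancherel (qLagPoly (q:ℂ) ((a:ℂ) * b / q) n) (qLagPoly (q:ℂ) ((a:ℂ) * b / q) m)
    simpa only [hTa, hTb] using hP
  · rw [mul_eq_zero]
    right
    rcases lt_or_gt_of_ne hnm with h | h
    · rw [hcast]
      exact main_vanish hq0 hq1 hab0 habq h
    · rw [hcast]
      rw [tsum_congr (fun k : ℕ => by ring :
        ∀ k : ℕ, (qLagPoly (q:ℂ) (((a*b:ℝ):ℂ) / q) n).eval ((q:ℂ)^k) *
            (qLagPoly (q:ℂ) (((a*b:ℝ):ℂ) / q) m).eval ((q:ℂ)^k) * (((a*b:ℝ):ℂ))^k *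
            (1 / qPoch (q:ℂ) (q:ℂ) k)
          = (qLagPoly (q:ℂ) (((a*b:ℝ):ℂ) / q) m).eval ((q:ℂ)^k) *
            (qLagPoly (q:ℂ) (((a*b:ℝ):ℂ) / q) n).eval ((q:ℂ)^k) * (((a*b:ℝ):ℂ))^k *
            (1 / qPoch (q:ℂ) (q:ℂ) k))]
      exact main_vanish hq0 hq1 hab0 habq h
end
end
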